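/- Let p = (p_1, p_2, p_3, p_4) be positive integers with gcd 1, q_i = gcd of the p_j for j ≠ i, Q = q_1 q_2 q_3 q_4, and p̃_k = p_k q_k / Q (which are integers). Then for all i ≠ j, one has q_{ij} · q_i · q_j = gcd of the p_k over k ∉ {i, j}, where q_{ij} denotes the gcd of the p̃_k over k ∉ {i, j}. -/

import Mathlib

/-!
Write `S` for the complement of `{i, j}`. Any common divisor of `q_m` and `p_m` divides every
weight, so it is `1`; hence the `q_m` are pairwise coprime, and `q_m` is coprime to
`gcd_{k ∈ S} p_k` for `m ∈ S`. Consequently, dividing each `p_k`, `k ∈ S`, by the `q_m` with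
`m ∈ S \ {k}` does not change the gcd over `S`, while the remaining factor `q_i q_j` divides all
these quotients and so comes out of their gcd.
-/

open Finset

namespace Finset

theorem gcd_div_mul_cancel {β : Type*} {S : Finset β} {f : β → ℕ} {a : ℕ}
    (ha : ∀ k ∈ S, a ∣ f k) :
    S.gcd (fun k => f k / a) * a = S.gcd f := by
  have h := gcd_mul_left (s := S) (f := fun k => f k / a) (a := a)
  rw [normalize_eq] at h
  rw [mul_comm, ← h]
  exact gcd_congr rfl fun k hk => Nat.mul_div_cancel' (ha k hk)

variable {ι : Type*} [Fintype ι] [DecidableEq ι]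

-- `gcdExcept p i` and `reducedWeight p k` are the paper's `q_i` and `p̃_k`.
def gcdExcept (p : ι → ℕ) (i : ι) : ℕ :=
  (univ.erase i).gcd p

def reducedWeight (p : ι → ℕ) (k : ι) : ℕ :=
  p k * gcdExcept p k / ∏ m, gcdExcept p m

variable {p : ι → ℕ}

theorem gcdExcept_dvd {i k : ι} (hki : k ≠ i) : gcdExcept p i ∣ p k :=
  gcd_dvd (mem_erase.mpr ⟨hki, mem_univ k⟩)

theorem gcdExcept_ne_zero {i k : ι} (hki : k ≠ i) (hk : p k ≠ 0) : gcdExcept p i ≠ 0 :=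
  fun h => hk (gcd_eq_zero_iff.mp h k (mem_erase.mpr ⟨hki, mem_univ k⟩))

theorem coprime_gcdExcept_self (hp : univ.gcd p = 1) (i : ι) :
    Nat.Coprime (gcdExcept p i) (p i) := by
  rw [← insert_erase (mem_univ i), gcd_insert] at hp
  exact Nat.coprime_comm.mp hp

theorem coprime_gcdExcept_of_dvd {i : ι} {d : ℕ} (hp : univ.gcd p = 1) (hd : d ∣ p i) :
    Nat.Coprime (gcdExcept p i) d :=
  (coprime_gcdExcept_self hp i).coprime_dvd_right hd

theorem coprime_gcdExcept {i j : ι} (hp : univ.gcd p = 1) (hij : i ≠ j) :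
    Nat.Coprime (gcdExcept p i) (gcdExcept p j) :=
  coprime_gcdExcept_of_dvd hp (gcdExcept_dvd hij)

theorem prod_gcdExcept_dvd {T : Finset ι} {k : ι} (hp : univ.gcd p = 1) (hk : k ∉ T) :
    ∏ m ∈ T, gcdExcept p m ∣ p k :=
  prod_dvd_of_isRelPrime
    (fun _ _ _ _ hij => Nat.coprime_iff_isRelPrime.mp (coprime_gcdExcept hp hij))
    (fun _ hm => gcdExcept_dvd (ne_of_mem_of_not_mem hm hk).symm)

theorem gcd_div_prod_erase_gcdExcept (hp : univ.gcd p = 1) (S : Finset ι) :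
    S.gcd (fun k => p k / ∏ m ∈ S.erase k, gcdExcept p m) = S.gcd p := by
  refine Nat.dvd_antisymm (gcd_mono_fun fun k _ => ?_) (dvd_gcd fun k hk => ?_)
  · exact Nat.div_dvd_of_dvd (prod_gcdExcept_dvd hp (notMem_erase k S))
  · have hcop : Nat.Coprime (S.gcd p) (∏ m ∈ S.erase k, gcdExcept p m) :=
      Nat.Coprime.prod_right fun m hm =>
        (coprime_gcdExcept_of_dvd hp (gcd_dvd (mem_of_mem_erase hm))).symm
    exact Nat.dvd_div_of_mul_dvd
      (hcop.symm.mul_dvd_of_dvd_of_dvd (prod_gcdExcept_dvd hp (notMem_erase k S)) (gcd_dvd hk))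

theorem reducedWeight_eq_div_div {S : Finset ι} {k : ι} (hk : k ∈ S)
    (hk0 : gcdExcept p k ≠ 0) :
    reducedWeight p k =
      (p k / ∏ m ∈ S.erase k, gcdExcept p m) / ∏ m ∈ Sᶜ, gcdExcept p m := by
  have hQ : ∏ m, gcdExcept p m =
      gcdExcept p k * ((∏ m ∈ S.erase k, gcdExcept p m) * ∏ m ∈ Sᶜ, gcdExcept p m) := by
    rw [← prod_mul_prod_compl S, ← mul_prod_erase S _ hk, mul_assoc]
  rw [reducedWeight, hQ, Nat.mul_comm (p k), Nat.mul_div_mul_left _ _ (Nat.pos_of_ne_zero hk0),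
    Nat.div_div_eq_div_mul]

theorem prod_compl_gcdExcept_dvd (hp : univ.gcd p = 1) {S : Finset ι} {k : ι} (hk : k ∈ S) :
    ∏ m ∈ Sᶜ, gcdExcept p m ∣ p k / ∏ m ∈ S.erase k, gcdExcept p m := by
  have h := prod_gcdExcept_dvd hp (T := S.erase k ∪ Sᶜ) (k := k) (by simp [hk])
  rw [prod_union (disjoint_compl_right.mono_left (erase_subset k S))] at h
  exact Nat.dvd_div_of_mul_dvd h

theorem gcd_reducedWeight_mul_prod_compl (hp : univ.gcd p = 1) (S : Finset ι)
    (hS : ∀ k ∈ S, gcdExcept p k ≠ 0) :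
    S.gcd (reducedWeight p) * ∏ m ∈ Sᶜ, gcdExcept p m = S.gcd p := by
  rw [← gcd_div_prod_erase_gcdExcept hp S,
    ← gcd_div_mul_cancel fun k hk => prod_compl_gcdExcept_dvd hp hk]
  congr 1
  exact gcd_congr rfl fun k hk => reducedWeight_eq_div_div hk (hS k hk)

end Finset

theorem reduced_pair_gcd_identity_general (p : Fin 4 → ℕ)
    (hp : ∀ i, 0 < p i) (hgcd : Finset.univ.gcd p = 1)
    (q : Fin 4 → ℕ) (hq : ∀ i, q i = (Finset.univ.erase i).gcd p)
    (Q : ℕ) (hQ : Q = ∏ i, q i)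
    (pt : Fin 4 → ℕ) (hpt : ∀ k, pt k = p k * q k / Q) :
    ∀ i j, i ≠ j →
      ((Finset.univ.erase i).erase j).gcd pt * q i * q j =
        ((Finset.univ.erase i).erase j).gcd p := by
  intro i j hij
  obtain rfl : q = gcdExcept p := funext hq
  obtain rfl : pt = reducedWeight p := funext fun k => by rw [hpt, hQ, reducedWeight]
  have hcompl : ((univ.erase i).erase j)ᶜ = {i, j} := by
    ext k
    simp only [mem_compl, mem_erase, mem_univ, mem_insert, mem_singleton]
    tauto
  have hS : ∀ k ∈ (univ.erase i).erase j, gcdExcept p k ≠ 0 := fun k hk =>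
    gcdExcept_ne_zero (mem_erase.mp (mem_of_mem_erase hk)).1.symm (hp i).ne'
  rw [mul_assoc, ← prod_pair hij, ← hcompl]
  exact gcd_reducedWeight_mul_prod_compl hgcd _ hS

/-- For `n = 4` weights with gcd 1, partial gcds `q`, `Q = q 1 q 2 q 3 q 4`
and reduced weights `p̃ k = p k * q k / Q`, one has for all `i ≠ j` that
`q_{ij} * q i * q j` equals the gcd of the `p k` over `k ∉ {i, j}`, where
`q_{ij}` is the gcd of the reduced weights over `k ∉ {i, j}`. -/
theorem reduced_pair_gcd_identity (p : Fin 4 → ℕ)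
    (hp : ∀ i, 0 < p i) (hgcd : Finset.univ.gcd p = 1)
    (q : Fin 4 → ℕ) (hq : ∀ i, q i = (Finset.univ.erase i).gcd p)
    (Q : ℕ) (hQ : Q = ∏ i, q i)
    (pt : Fin 4 → ℕ) (hpt : ∀ k, pt k = p k * q k / Q)
    (hint : ∀ k, Q ∣ p k * q k) :
    ∀ i j, i ≠ j →
      ((Finset.univ.erase i).erase j).gcd pt * q i * q j =
        ((Finset.univ.erase i).erase j).gcd p :=
  reduced_pair_gcd_identity_general p hp hgcd q hq Q hQ pt hpt
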